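/- Let R be a field complete with respect to a non-Archimedean absolute value, and let R{t,u} be the ring of power series Σ_{m,n≥0} c_{mn} t^m u^n with |c_{mn}| r^{m+n} → 0 for every r > 0. The substitution t ↦ t, u ↦ t^{-1} induces an isomorphism of R-algebras R{t,u}/(tu-1) ≅ A_R(𝔾_m). -/

import Mathlib

open Filter Topology

noncomputable section

/-- Coefficient condition defining `R{t,u}`: `‖c_{mn}‖ r^{m+n} → 0` for every `r > 0`. -/
def T2OK {R : Type*} [NormedField R] (c : ℕ × ℕ → R) : Prop :=
  ∀ r : ℝ, 0 < r →
    Tendsto (fun mn : ℕ × ℕ => ‖c mn‖ * r ^ (mn.1 + mn.2)) (cocompact (ℕ × ℕ)) (𝓝 0)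

/-- Multiplication of two-variable power series on coefficients. -/
def mul2 {R : Type*} [CommRing R] (c d : ℕ × ℕ → R) : ℕ × ℕ → R := fun mn =>
  ∑ i ∈ Finset.range (mn.1 + 1), ∑ j ∈ Finset.range (mn.2 + 1),
    c (i, j) * d (mn.1 - i, mn.2 - j)

/-- Condition defining `A_R(𝔾_m)`. -/
def GmOK {R : Type*} [NormedField R] (c : ℤ → R) : Prop :=
  ∀ r : ℝ, 0 < r → Tendsto (fun n : ℤ => ‖c n‖ * r ^ |n|) (cocompact ℤ) (𝓝 0)

/-- Multiplication of Laurent series on coefficients. -/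
def lmul {R : Type*} [NormedField R] (c d : ℤ → R) : ℤ → R :=
  fun n => ∑' u : ℤ, c u * d (n - u)

/-- The substitution map `t ↦ t`, `u ↦ t⁻¹` on coefficients: the coefficient of `t^d`
in `f(t, t⁻¹)` is `∑_{m - n = d} c_{mn}`. -/
def toGm {R : Type*} [NormedField R] (c : ℕ × ℕ → R) : ℤ → R := fun d =>
  ∑' mn : ℕ × ℕ, if (mn.1 : ℤ) - (mn.2 : ℤ) = d then c mn else 0

/-- The coefficients of `t·u - 1 ∈ R{t,u}`. -/
def tuSubOne (R : Type*) [CommRing R] : ℕ × ℕ → R := fun p =>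
  if p = (1, 1) then 1 else if p = (0, 0) then -1 else 0

/-! The growth conditions say that the coefficients decay faster than any geometric sequence,
so all the families of coefficients that occur are absolutely summable and can be regrouped freely.

The coefficient of `t^k` in `f(t, t⁻¹)` is the sum of `c` along the diagonal `m - n = k`, which
starts at `(k, 0)` or `(0, -k)`; that point has total degree `|k|`, whence the growth of `toGm c`.
Multiplicativity is the regrouping of the family `c p * d q`, once by `p + q` and once by the
Laurent degree of `p`. A Laurent series is hit by the series supported on the two axes. Finally, if
every diagonal sum of `c` vanishes, then `d (m, n) = ∑_{j ≥ 1} c (m + j, n + j)` satisfies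
`c = (t u - 1) d`, and these tails inherit the decay of `c`. -/

section Fiberwise

variable {α β E : Type*} [DecidableEq β] [NormedAddCommGroup E] [CompleteSpace E]

theorem Summable.ite_eq {f : α → E} (hf : Summable f) (g : α → β) (b : β) :
    Summable fun x => if g x = b then f x else 0 := by
  convert hf.indicator {x | g x = b} using 1
  ext x
  simp [Set.indicator_apply]

theorem hasSum_tsum_ite_eq {f : α → E} (hf : Summable f) (g : α → β) :
    HasSum (fun b => ∑' x, if g x = b then f x else 0) (∑' x, f x) := by
  convert hf.hasSum.tsum_fiberwise g using 1
  ext b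
  rw [tsum_subtype]
  congr with x
  by_cases h : g x = b <;> simp [h]

theorem Summable.comp_diag {f : ℕ × ℕ → E} (hf : Summable f) (p : ℕ × ℕ) :
    Summable fun j : ℕ => f (p.1 + j, p.2 + j) :=
  hf.comp_injective fun i j h => by simpa using congrArg Prod.fst h

end Fiberwise

theorem zpow_abs_eq_pow_natAbs {G : Type*} [DivInvMonoid G] (a : G) (n : ℤ) :
    a ^ |n| = a ^ n.natAbs := by
  rw [Int.abs_eq_natAbs, zpow_natCast]

section Weighted

variable {α : Type*} {w : α → ℕ} {f : α → ℝ}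

theorem summable_mul_pow_of_bound (hw : Summable fun x => (2⁻¹ : ℝ) ^ w x) (hf : 0 ≤ f)
    {r C : ℝ} (hr : 0 < r) (hC : ∀ x, f x * (2 * r) ^ w x ≤ C) :
    Summable fun x => f x * r ^ w x := by
  refine (hw.mul_left C).of_nonneg_of_le (fun x => mul_nonneg (hf x) (pow_nonneg hr.le _))
    fun x => ?_
  calc f x * r ^ w x = f x * (2 * r) ^ w x * (2⁻¹) ^ w x := by
        rw [mul_assoc, ← mul_pow]; field_simp
    _ ≤ C * (2⁻¹) ^ w x := by gcongr; exact hC x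

theorem tendsto_mul_pow_of_bound (hw : Summable fun x => (2⁻¹ : ℝ) ^ w x) (hf : 0 ≤ f)
    (h : ∀ r : ℝ, 0 < r → ∃ C, ∀ x, f x * r ^ w x ≤ C) {r : ℝ} (hr : 0 < r) :
    Tendsto (fun x => f x * r ^ w x) cofinite (𝓝 0) :=
  have ⟨_, hC⟩ := h (2 * r) (by positivity)
  (summable_mul_pow_of_bound hw hf hr hC).tendsto_cofinite_zero

theorem exists_bound_of_tendsto {g : α → ℝ} (h : Tendsto g cofinite (𝓝 0)) : ∃ C, ∀ x, g x ≤ C :=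
  have ⟨C, hC⟩ := h.bddAbove_range_of_cofinite
  ⟨C, fun x => hC ⟨x, rfl⟩⟩

end Weighted

theorem summable_half_pow_add : Summable fun p : ℕ × ℕ => (2⁻¹ : ℝ) ^ (p.1 + p.2) := by
  have h := summable_geometric_of_lt_one (r := (2⁻¹ : ℝ)) (by norm_num) (by norm_num)
  simpa only [pow_add] using h.mul_of_nonneg h (fun _ => by positivity) (fun _ => by positivity)

theorem summable_half_pow_natAbs : Summable fun n : ℤ => (2⁻¹ : ℝ) ^ n.natAbs :=
  .of_nat_of_neg (by simpa using summable_geometric_two) (by simpa using summable_geometric_two)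

section Growth

variable {R : Type*} [NormedField R]

theorem T2OK.exists_bound {c : ℕ × ℕ → R} (hc : T2OK c) {r : ℝ} (hr : 0 < r) :
    ∃ C, ∀ p : ℕ × ℕ, ‖c p‖ * r ^ (p.1 + p.2) ≤ C :=
  exists_bound_of_tendsto (by simpa only [cocompact_eq_cofinite] using hc r hr)

theorem T2OK.summable_mul_pow {c : ℕ × ℕ → R} (hc : T2OK c) {r : ℝ} (hr : 0 < r) :
    Summable fun p : ℕ × ℕ => ‖c p‖ * r ^ (p.1 + p.2) :=
  have ⟨_, hC⟩ := hc.exists_bound (mul_pos two_pos hr)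
  summable_mul_pow_of_bound summable_half_pow_add (fun _ => norm_nonneg _) hr hC

theorem T2OK.summable_norm {c : ℕ × ℕ → R} (hc : T2OK c) : Summable fun p => ‖c p‖ := by
  simpa using hc.summable_mul_pow one_pos

theorem T2OK.summable [CompleteSpace R] {c : ℕ × ℕ → R} (hc : T2OK c) : Summable c :=
  hc.summable_norm.of_norm

theorem T2OK.of_bound {c : ℕ × ℕ → R}
    (h : ∀ r : ℝ, 0 < r → ∃ C, ∀ p : ℕ × ℕ, ‖c p‖ * r ^ (p.1 + p.2) ≤ C) : T2OK c :=
  fun _ hr => by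
    simpa only [cocompact_eq_cofinite] using
      tendsto_mul_pow_of_bound summable_half_pow_add (fun _ => norm_nonneg _) h hr

theorem T2OK.of_finite_support {c : ℕ × ℕ → R} (hc : (Function.support c).Finite) : T2OK c :=
  fun _ _ => by
    rw [cocompact_eq_cofinite]
    exact tendsto_nhds_of_eventually_eq <| hc.eventually_cofinite_notMem.mono fun p hp => by
      simp [Function.notMem_support.1 hp]

theorem GmOK.exists_bound {e : ℤ → R} (he : GmOK e) {r : ℝ} (hr : 0 < r) :
    ∃ C, ∀ n : ℤ, ‖e n‖ * r ^ n.natAbs ≤ C :=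
  exists_bound_of_tendsto <| by
    simpa only [cocompact_eq_cofinite, zpow_abs_eq_pow_natAbs] using he r hr

theorem GmOK.of_bound {e : ℤ → R}
    (h : ∀ r : ℝ, 0 < r → ∃ C, ∀ n : ℤ, ‖e n‖ * r ^ n.natAbs ≤ C) : GmOK e :=
  fun _ hr => by
    simpa only [cocompact_eq_cofinite, zpow_abs_eq_pow_natAbs] using
      tendsto_mul_pow_of_bound summable_half_pow_natAbs (fun _ => norm_nonneg _) h hr

end Growth

def laurentDegree (p : ℕ × ℕ) : ℤ := p.1 - p.2

theorem laurentDegree_add (p q : ℕ × ℕ) :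
    laurentDegree (p + q) = laurentDegree p + laurentDegree q := by
  simp only [laurentDegree, Prod.fst_add, Prod.snd_add]
  push_cast
  ring

/-- The exponents of `t^k` if `k ≥ 0`, of `u^(-k)` if `k < 0`. -/
def indexOfDegree (k : ℤ) : ℕ × ℕ := (k.toNat, (-k).toNat)

theorem laurentDegree_indexOfDegree (k : ℤ) : laurentDegree (indexOfDegree k) = k := by
  simp only [laurentDegree, indexOfDegree]
  omega

theorem indexOfDegree_injective : Function.Injective indexOfDegree :=
  Function.LeftInverse.injective laurentDegree_indexOfDegree

theorem indexOfDegree_fst_add_snd (k : ℤ) :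
    (indexOfDegree k).1 + (indexOfDegree k).2 = k.natAbs := by
  simp only [indexOfDegree]
  omega

theorem indexOfDegree_laurentDegree {p : ℕ × ℕ} (hp : p.1 = 0 ∨ p.2 = 0) :
    indexOfDegree (laurentDegree p) = p := by
  simp only [indexOfDegree, laurentDegree, Prod.ext_iff]
  omega

section Substitution

variable {R : Type*} [NormedField R]

theorem toGm_apply (c : ℕ × ℕ → R) (k : ℤ) :
    toGm c k = ∑' p, if laurentDegree p = k then c p else 0 := rfl

def diagSum (c : ℕ × ℕ → R) (p : ℕ × ℕ) : R := ∑' j : ℕ, c (p.1 + j, p.2 + j)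

theorem diagSum_indexOfDegree (c : ℕ × ℕ → R) (k : ℤ) :
    diagSum c (indexOfDegree k) = toGm c k := by
  have hinj : Function.Injective fun j : ℕ => (k.toNat + j, (-k).toNat + j) := fun i j h => by
    simpa using congrArg Prod.fst h
  have hsupp : (Function.support fun p => if laurentDegree p = k then c p else 0) ⊆
      Set.range fun j : ℕ => (k.toNat + j, (-k).toNat + j) := by
    intro p hp
    have hk : laurentDegree p = k := by by_contra h; simp [h] at hp
    simp only [laurentDegree] at hk
    exact ⟨min p.1 p.2, by ext <;> simp <;> omega⟩
  rw [toGm_apply, ← hinj.tsum_eq hsupp]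
  exact tsum_congr fun j => (if_pos (by simp only [laurentDegree]; push_cast; omega)).symm

theorem norm_diagSum_mul_pow_le {c : ℕ × ℕ → R} (hc : Summable fun p => ‖c p‖) {M C : ℝ}
    (hM : 2 ≤ M) (hC : ∀ p : ℕ × ℕ, ‖c p‖ * M ^ (p.1 + p.2) ≤ C) (p : ℕ × ℕ) :
    ‖diagSum c p‖ * M ^ (p.1 + p.2) ≤ 2 * C := by
  have hdiag := hc.comp_diag p
  have hterm (j : ℕ) : ‖c (p.1 + j, p.2 + j)‖ * M ^ (p.1 + p.2) ≤ C * (1 / 2) ^ j := by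
    have hC' := hC (p.1 + j, p.2 + j)
    have h2j : (2 : ℝ) ^ j ≤ M ^ (2 * j) := by
      rw [pow_mul]; exact pow_le_pow_left₀ two_pos.le (by nlinarith) j
    rw [show p.1 + j + (p.2 + j) = p.1 + p.2 + 2 * j by ring, pow_add] at hC'
    rw [one_div_pow, mul_one_div, le_div_iff₀ (by positivity)]
    calc _ ≤ ‖c (p.1 + j, p.2 + j)‖ * M ^ (p.1 + p.2) * M ^ (2 * j) := by gcongr
      _ ≤ C := by linarith
  calc ‖diagSum c p‖ * M ^ (p.1 + p.2)
      ≤ (∑' j, ‖c (p.1 + j, p.2 + j)‖) * M ^ (p.1 + p.2) := by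
        gcongr; exact norm_tsum_le_tsum_norm hdiag
    _ = ∑' j, ‖c (p.1 + j, p.2 + j)‖ * M ^ (p.1 + p.2) := tsum_mul_right.symm
    _ ≤ ∑' j : ℕ, C * (1 / 2) ^ j :=
        (hdiag.mul_right _).tsum_le_tsum hterm ((summable_geometric_two).mul_left C)
    _ = 2 * C := by rw [tsum_mul_left, tsum_geometric_two, mul_comm]

theorem gmOK_toGm {c : ℕ × ℕ → R} (hc : T2OK c) : GmOK (toGm c) := by
  refine GmOK.of_bound fun r hr => ?_
  set M := max r 2
  obtain ⟨C, hC⟩ := hc.exists_bound (lt_of_lt_of_le hr (le_max_left r 2))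
  refine ⟨2 * C, fun k => ?_⟩
  calc ‖toGm c k‖ * r ^ k.natAbs
      ≤ ‖diagSum c (indexOfDegree k)‖ * M ^ ((indexOfDegree k).1 + (indexOfDegree k).2) := by
        rw [diagSum_indexOfDegree, indexOfDegree_fst_add_snd]
        gcongr
        exact le_max_left r 2
    _ ≤ 2 * C := norm_diagSum_mul_pow_le hc.summable_norm (le_max_right r 2) hC _

theorem toGm_single (p : ℕ × ℕ) (a : R) :
    toGm (Pi.single p a) = Pi.single (laurentDegree p) a := by
  ext k
  rw [toGm_apply, tsum_eq_single p fun q hq => by simp [hq], Pi.single_eq_same, Pi.single_apply]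
  exact if_congr eq_comm rfl rfl

theorem mul2_eq_tsum (c d : ℕ × ℕ → R) (s : ℕ × ℕ) :
    mul2 c d s = ∑' x : (ℕ × ℕ) × (ℕ × ℕ), if x.1 + x.2 = s then c x.1 * d x.2 else 0 := by
  have hinj : Function.Injective fun p : ℕ × ℕ => (p, s - p) := fun _ _ h => congrArg Prod.fst h
  have hsupp : (Function.support fun x : (ℕ × ℕ) × (ℕ × ℕ) =>
      if x.1 + x.2 = s then c x.1 * d x.2 else 0) ⊆ Set.range fun p => (p, s - p) := by
    intro x hx
    have h : x.1 + x.2 = s := by by_contra h; simp [h] at hx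
    exact ⟨x.1, by simp [← h]⟩
  rw [← hinj.tsum_eq hsupp, tsum_eq_sum (s := Finset.range (s.1 + 1) ×ˢ Finset.range (s.2 + 1)),
    mul2, ← Finset.sum_product']
  · refine Finset.sum_congr rfl fun p hp => ?_
    simp only [Finset.mem_product, Finset.mem_range] at hp
    rw [if_pos (by ext <;> simp <;> omega)]
    rfl
  · intro p hp
    rw [if_neg]
    contrapose! hp
    simp only [Prod.ext_iff, Prod.fst_add, Prod.snd_add, Prod.fst_sub, Prod.snd_sub] at hp
    simp only [Finset.mem_product, Finset.mem_range]
    omega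

theorem exists_t2OK_toGm_eq {e : ℤ → R} (he : GmOK e) : ∃ c, T2OK c ∧ toGm c = e := by
  refine ⟨Function.extend indexOfDegree e 0, T2OK.of_bound fun r hr => ?_, ?_⟩
  · obtain ⟨C, hC⟩ := he.exists_bound hr
    refine ⟨max C 0, fun p => ?_⟩
    by_cases hp : ∃ k, indexOfDegree k = p
    · obtain ⟨k, rfl⟩ := hp
      rw [indexOfDegree_injective.extend_apply, indexOfDegree_fst_add_snd]
      exact le_max_of_le_left (hC k)
    · simp [Function.extend_apply' _ _ _ hp]
  · ext k
    have hsupp : (Function.support fun p =>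
        if laurentDegree p = k then Function.extend indexOfDegree e 0 p else 0) ⊆
        Set.range indexOfDegree := fun p hp => by
      by_contra h
      simp [Function.extend_apply' _ _ _ h] at hp
    rw [toGm_apply, ← indexOfDegree_injective.tsum_eq hsupp,
      tsum_eq_single k fun j hj => by simp [laurentDegree_indexOfDegree, hj]]
    simp [laurentDegree_indexOfDegree, indexOfDegree_injective.extend_apply]

theorem tuSubOne_eq : tuSubOne R = Pi.single (1, 1) 1 + Pi.single (0, 0) (-1) := by
  ext p
  by_cases h : p = (1, 1) <;> simp [tuSubOne, Pi.single_apply, h]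

theorem t2OK_tuSubOne : T2OK (tuSubOne R) := by
  refine .of_finite_support
    (((Set.finite_singleton (1, 1)).union (Set.finite_singleton (0, 0))).subset ?_)
  rw [tuSubOne_eq]
  exact (Function.support_add _ _).trans
    (Set.union_subset_union Pi.support_single_subset Pi.support_single_subset)

theorem mul2_add_left (c c' d : ℕ × ℕ → R) : mul2 (c + c') d = mul2 c d + mul2 c' d := by
  ext s
  simp only [mul2, Pi.add_apply, add_mul, Finset.sum_add_distrib]

theorem mul2_single_left (p : ℕ × ℕ) (a : R) (d : ℕ × ℕ → R) (s : ℕ × ℕ) :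
    mul2 (Pi.single p a) d s = if p ≤ s then a * d (s - p) else 0 := by
  simp only [mul2, ← Finset.sum_product', Pi.single_apply, ite_mul, zero_mul, Prod.mk.eta,
    Finset.sum_ite_eq', Finset.mem_product, Finset.mem_range, Nat.lt_succ_iff, Prod.le_def]
  rfl

theorem mul2_tuSubOne_apply (d : ℕ × ℕ → R) (s : ℕ × ℕ) :
    mul2 (tuSubOne R) d s = (if (1, 1) ≤ s then d (s - (1, 1)) else 0) - d s := by
  simp [tuSubOne_eq, mul2_add_left, mul2_single_left, sub_eq_add_neg, Prod.mk_zero_zero]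

variable [CompleteSpace R]

theorem toGm_add {c d : ℕ × ℕ → R} (hc : Summable c) (hd : Summable d) :
    toGm (c + d) = toGm c + toGm d := by
  ext k
  simp only [toGm_apply, Pi.add_apply]
  rw [← (hc.ite_eq _ k).tsum_add (hd.ite_eq _ k)]
  exact tsum_congr fun p => by split_ifs <;> simp

theorem toGm_tuSubOne : toGm (tuSubOne R) = 0 := by
  rw [tuSubOne_eq, toGm_add (hasSum_pi_single _ _).summable (hasSum_pi_single _ _).summable,
    toGm_single, toGm_single, show laurentDegree (1, 1) = laurentDegree (0, 0) from rfl,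
    ← Pi.single_add, add_neg_cancel, Pi.single_zero]

theorem toGm_mul2 {c d : ℕ × ℕ → R} (hc : Summable fun p => ‖c p‖)
    (hd : Summable fun p => ‖d p‖) : toGm (mul2 c d) = lmul (toGm c) (toGm d) := by
  ext k
  set F : (ℕ × ℕ) × (ℕ × ℕ) → R := fun x =>
    if laurentDegree x.1 + laurentDegree x.2 = k then c x.1 * d x.2 else 0
  have hF : Summable F := (summable_mul_of_summable_norm hc hd).ite_eq _ k
  have hfiber {f : ℕ × ℕ → R} (hf : Summable fun p => ‖f p‖) (u : ℤ) :
      Summable fun p => ‖if laurentDegree p = u then f p else 0‖ :=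
    hf.of_nonneg_of_le (fun _ => norm_nonneg _) fun p => by split_ifs <;> simp
  calc toGm (mul2 c d) k
      = ∑' s, ∑' x : (ℕ × ℕ) × (ℕ × ℕ), if x.1 + x.2 = s then F x else 0 := by
        refine tsum_congr fun s => ?_
        rw [mul2_eq_tsum]
        have hdeg {x : (ℕ × ℕ) × (ℕ × ℕ)} (hx : x.1 + x.2 = s) :
            laurentDegree x.1 + laurentDegree x.2 = laurentDegree s := by
          rw [← laurentDegree_add, hx]
        split_ifs with hs
        · refine tsum_congr fun x => ?_
          split_ifs with hx
          · exact (if_pos ((hdeg hx).trans hs)).symm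
          · rfl
        · refine ((tsum_congr fun x => ?_).trans tsum_zero).symm
          split_ifs with hx
          · exact if_neg fun h => hs ((hdeg hx).symm.trans h)
          · rfl
    _ = ∑' x, F x := (hasSum_tsum_ite_eq hF _).tsum_eq
    _ = ∑' u, ∑' x : (ℕ × ℕ) × (ℕ × ℕ), if laurentDegree x.1 = u then F x else 0 :=
        (hasSum_tsum_ite_eq hF _).tsum_eq.symm
    _ = lmul (toGm c) (toGm d) k := by
        refine tsum_congr fun u => ?_
        rw [toGm_apply, toGm_apply,
          tsum_mul_tsum_of_summable_norm (hfiber hc u) (hfiber hd (k - u))]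
        refine tsum_congr fun x => ?_
        simp only [F]
        split_ifs <;> first | rfl | (exfalso; omega) | simp

theorem diagSum_eq_add {c : ℕ × ℕ → R} (hc : Summable c) (p : ℕ × ℕ) :
    diagSum c p = c p + diagSum c (p.1 + 1, p.2 + 1) := by
  rw [diagSum, (hc.comp_diag p).tsum_eq_zero_add]
  simp only [add_zero, diagSum, add_assoc, add_comm 1]

theorem exists_eq_mul2_tuSubOne {c : ℕ × ℕ → R} (hc : T2OK c) (h : toGm c = 0) :
    ∃ d, T2OK d ∧ c = mul2 (tuSubOne R) d := by
  refine ⟨fun p => diagSum c (p.1 + 1, p.2 + 1), T2OK.of_bound fun r hr => ?_, ?_⟩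
  · set M := max r 2
    obtain ⟨C, hC⟩ := hc.exists_bound (lt_of_lt_of_le hr (le_max_left r 2))
    refine ⟨2 * C, fun p => ?_⟩
    calc ‖diagSum c (p.1 + 1, p.2 + 1)‖ * r ^ (p.1 + p.2)
        ≤ ‖diagSum c (p.1 + 1, p.2 + 1)‖ * M ^ (p.1 + 1 + (p.2 + 1)) := by
          gcongr
          exact (pow_le_pow_left₀ hr.le (le_max_left r 2) _).trans
            (pow_le_pow_right₀ (one_le_two.trans (le_max_right r 2)) (by omega))
      _ ≤ 2 * C := norm_diagSum_mul_pow_le hc.summable_norm (le_max_right r 2) hC _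
  · ext s
    rw [mul2_tuSubOne_apply, eq_sub_iff_add_eq, ← diagSum_eq_add hc.summable]
    split_ifs with hs
    · congr 1
      simp only [Prod.le_def] at hs
      ext <;> simp <;> omega
    -- off the quadrant `(1, 1) ≤ s`, the diagonal through `s` is a whole fibre of `toGm`
    · rw [← indexOfDegree_laurentDegree (p := s) (by simp only [Prod.le_def] at hs; omega),
        diagSum_indexOfDegree, h, Pi.zero_apply]

end Substitution

theorem quotient_iso_Gm_general {R : Type*} [NormedField R] [CompleteSpace R] :
    (∀ c : ℕ × ℕ → R, T2OK c → GmOK (toGm c)) ∧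
    (∀ c d : ℕ × ℕ → R, T2OK c → T2OK d → toGm (c + d) = toGm c + toGm d) ∧
    (∀ c d : ℕ × ℕ → R, T2OK c → T2OK d → toGm (mul2 c d) = lmul (toGm c) (toGm d)) ∧
    (toGm (fun p : ℕ × ℕ => if p = (0,0) then (1:R) else 0) =
      fun n : ℤ => if n = 0 then (1:R) else 0) ∧
    (∀ e : ℤ → R, GmOK e → ∃ c : ℕ × ℕ → R, T2OK c ∧ toGm c = e) ∧
    (∀ c : ℕ × ℕ → R, T2OK c →
      (toGm c = 0 ↔ ∃ d : ℕ × ℕ → R, T2OK d ∧ c = mul2 (tuSubOne R) d)) := by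
  refine ⟨fun c hc => gmOK_toGm hc,
    fun c d hc hd => toGm_add hc.summable hd.summable,
    fun c d hc hd => toGm_mul2 hc.summable_norm hd.summable_norm, ?_,
    fun e he => exists_t2OK_toGm_eq he,
    fun c hc => ⟨exists_eq_mul2_tuSubOne hc, ?_⟩⟩
  · ext k
    rw [toGm_apply, tsum_eq_single (0, 0) fun p hp => by simp [hp]]
    simp [laurentDegree, eq_comm]
  · rintro ⟨d, hd, rfl⟩
    rw [toGm_mul2 t2OK_tuSubOne.summable_norm hd.summable_norm, toGm_tuSubOne]
    ext n
    simp [lmul]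

/-- For a complete non-Archimedean valued field `R`, the substitution `t ↦ t`, `u ↦ t⁻¹`
induces an isomorphism of `R`-algebras `R{t,u}/(tu - 1) ≅ A_R(𝔾_m)`: the substitution map
is well defined on `R{t,u}`, is a ring morphism, is surjective onto `A_R(𝔾_m)`, and its
kernel is the principal ideal generated by `tu - 1`. -/
theorem quotient_iso_Gm {R : Type*} [NormedField R] [CompleteSpace R]
    (hna : IsNonarchimedean (norm : R → ℝ)) :
    (∀ c : ℕ × ℕ → R, T2OK c → GmOK (toGm c)) ∧
    (∀ c d : ℕ × ℕ → R, T2OK c → T2OK d → toGm (c + d) = toGm c + toGm d) ∧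
    (∀ c d : ℕ × ℕ → R, T2OK c → T2OK d → toGm (mul2 c d) = lmul (toGm c) (toGm d)) ∧
    (toGm (fun p : ℕ × ℕ => if p = (0,0) then (1:R) else 0) =
      fun n : ℤ => if n = 0 then (1:R) else 0) ∧
    (∀ e : ℤ → R, GmOK e → ∃ c : ℕ × ℕ → R, T2OK c ∧ toGm c = e) ∧
    (∀ c : ℕ × ℕ → R, T2OK c →
      (toGm c = 0 ↔ ∃ d : ℕ × ℕ → R, T2OK d ∧ c = mul2 (tuSubOne R) d)) :=
  quotient_iso_Gm_general
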